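/- arXiv:2510.20580 — 4 statements merged into one kernel-verified Lean document; each statement's English description precedes it below -/
import Mathlib

section
/- Let b > 0 and let U : [0, b/2) → ℝ be continuously differentiable with U'(s) ≥ 0 for all s ∈ [0, b/2) and lim_{s→(b/2)⁻} U(s) = +∞. If u : [0, √b] → [0, ∞) is continuous and the Lebesgue integral ∫_{(0,√b)} U'(r²/2)·u(r) dr (an integral of a nonnegative function) is finite, then u(√b) = 0. -/
open MeasureTheory Filter Set
open scoped ENNReal Topology

/-!
If `u(√b) > 0`, continuity gives `u ≥ u(√b)/2` on some interval `(a, √b)`, where therefore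
`U'(r²/2) u(r) ≥ k · U'(r²/2) r` for a constant `k > 0`. The right-hand side is the
derivative of `k · U(r²/2)`, which tends to `+∞` as `r → √b⁻`; a nonnegative derivative of
a function that blows up at an endpoint has infinite Lebesgue integral.
-/

theorem lintegral_Ioo_ofReal_eq_top_of_hasDerivAt_of_tendsto_atTop
    {F f : ℝ → ℝ} {a β : ℝ} (hab : a < β) (hF : ∀ x ∈ Ioo a β, HasDerivAt F (f x) x)
    (hf : ∀ x ∈ Ioo a β, 0 ≤ f x)
    (htop : Tendsto F (𝓝[<] β) atTop) :
    ∫⁻ x in Ioo a β, ENNReal.ofReal (f x) = ⊤ := by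
  obtain ⟨a', haa', ha'β⟩ := exists_between hab
  have hsub {t : ℝ} (ht : t < β) : Icc a' t ⊆ Ioo a β :=
    fun x hx => ⟨haa'.trans_le hx.1, hx.2.trans_lt ht⟩
  have hbound : ∀ t ∈ Ioo a' β,
      ENNReal.ofReal (F t - F a') ≤ ∫⁻ x in Ioo a β, ENNReal.ofReal (f x) := by
    rintro t ⟨ha't, htβ⟩
    have hcont : ContinuousOn F (Icc a' t) :=
      fun x hx => (hF x (hsub htβ hx)).continuousAt.continuousWithinAt
    have hderiv : ∀ x ∈ Ioo a' t, HasDerivAt F (f x) x :=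
      fun x hx => hF x (hsub htβ (Ioo_subset_Icc_self hx))
    have hint : IntegrableOn f (Ioc a' t) := intervalIntegral.integrableOn_deriv_of_nonneg hcont
      hderiv fun x hx => hf x (hsub htβ (Ioo_subset_Icc_self hx))
    calc ENNReal.ofReal (F t - F a') = ENNReal.ofReal (∫ x in Ioc a' t, f x) := by
          rw [← intervalIntegral.integral_of_le ha't.le,
            intervalIntegral.integral_eq_sub_of_hasDerivAt_of_le ha't.le hcont hderiv
              ((intervalIntegrable_iff_integrableOn_Ioc_of_le ha't.le).2 hint)]
      _ = ∫⁻ x in Ioc a' t, ENNReal.ofReal (f x) :=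
          ofReal_integral_eq_lintegral_ofReal hint <| ae_restrict_of_forall_mem measurableSet_Ioc
            fun x hx => hf x (hsub htβ (Ioc_subset_Icc_self hx))
      _ ≤ _ := lintegral_mono_set ((Ioc_subset_Icc_self).trans (hsub htβ))
  have hlim : Tendsto (fun t => ENNReal.ofReal (F t - F a')) (𝓝[<] β) (𝓝 ⊤) :=
    ENNReal.tendsto_ofReal_atTop.comp (tendsto_atTop_add_const_right _ _ htop)
  exact top_le_iff.1 (le_of_tendsto hlim (eventually_of_mem (Ioo_mem_nhdsLT ha'β) hbound))

theorem sq_div_two_mem_Ico_of_mem_Ico {b r : ℝ} (hr : r ∈ Ico 0 √b) :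
    r ^ 2 / 2 ∈ Ico 0 (b / 2) :=
  ⟨by positivity, by linarith [(Real.lt_sqrt hr.1).1 hr.2]⟩

theorem tendsto_sq_div_two_nhdsLT_sqrt {b : ℝ} (hb : 0 < b) :
    Tendsto (fun r : ℝ => r ^ 2 / 2) (𝓝[<] √b) (𝓝[<] (b / 2)) := by
  have hsb : 0 < √b := Real.sqrt_pos.2 hb
  refine tendsto_nhdsWithin_of_tendsto_nhds_of_eventually_within _ ?_ ?_
  · have := ((continuous_pow 2).div_const (2 : ℝ)).continuousAt (x := √b)
    simpa [Real.sq_sqrt hb.le] using this.tendsto.mono_left nhdsWithin_le_nhds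
  · filter_upwards [Ioo_mem_nhdsLT hsb] with r hr
    exact (sq_div_two_mem_Ico_of_mem_Ico ⟨hr.1.le, hr.2⟩).2

theorem lintegral_Ioo_ofReal_deriv_sq_div_two_mul_eq_top {b : ℝ} (hb : 0 < b) {U U' : ℝ → ℝ}
    (hUderiv : ∀ s ∈ Ico 0 (b / 2), HasDerivAt U (U' s) s)
    (hU'nonneg : ∀ s ∈ Ico 0 (b / 2), 0 ≤ U' s) (hUtop : Tendsto U (𝓝[<] (b / 2)) atTop)
    {a : ℝ} (ha : 0 ≤ a) (hab : a < √b) :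
    ∫⁻ r in Ioo a √b, ENNReal.ofReal (U' (r ^ 2 / 2) * r) = ⊤ := by
  have hmem {r : ℝ} (hr : r ∈ Ioo a √b) : r ^ 2 / 2 ∈ Ico 0 (b / 2) :=
    sq_div_two_mem_Ico_of_mem_Ico ⟨ha.trans hr.1.le, hr.2⟩
  refine lintegral_Ioo_ofReal_eq_top_of_hasDerivAt_of_tendsto_atTop (F := fun r => U (r ^ 2 / 2))
    hab (fun r hr => ?_) (fun r hr => ?_) (hUtop.comp (tendsto_sq_div_two_nhdsLT_sqrt hb))
  · have hsq : HasDerivAt (fun x : ℝ => x ^ 2 / 2) r r := by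
      simpa using (hasDerivAt_pow 2 r).div_const 2
    exact (hUderiv _ (hmem hr)).comp r hsq
  · exact mul_nonneg (hU'nonneg _ (hmem hr)) (ha.trans hr.1.le)

theorem stmt_0_general
    (b : ℝ) (hb : 0 < b)
    (U U' : ℝ → ℝ)
    (hUderiv : ∀ s ∈ Set.Ico (0:ℝ) (b/2), HasDerivAt U (U' s) s)
    (hU'nonneg : ∀ s ∈ Set.Ico (0:ℝ) (b/2), 0 ≤ U' s)
    (hUtop : Tendsto U (𝓝[<] (b/2)) atTop)
    (u : ℝ → ℝ)
    (hucont : ContinuousOn u (Set.Icc (0:ℝ) (Real.sqrt b)))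
    (hunonneg : ∀ r ∈ Set.Icc (0:ℝ) (Real.sqrt b), 0 ≤ u r)
    (hfin : ∫⁻ r in Set.Ioo (0:ℝ) (Real.sqrt b),
        ENNReal.ofReal (U' (r ^ 2 / 2) * u r) < ⊤) :
    u (Real.sqrt b) = 0 := by
  have hsb : 0 < √b := Real.sqrt_pos.2 hb
  set c := u √b
  by_contra hne
  have hc : 0 < c := (hunonneg _ ⟨hsb.le, le_rfl⟩).lt_of_ne' hne
  obtain ⟨a, ⟨ha0, hab⟩, hua⟩ : ∃ a ∈ Ico 0 √b, Ioo a √b ⊆ {r | c / 2 < u r} := by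
    refine (mem_nhdsLT_iff_exists_mem_Ico_Ioo_subset hsb).1 ?_
    have := (hucont _ ⟨hsb.le, le_rfl⟩).mono_of_mem_nhdsWithin (Icc_mem_nhdsLT hsb)
    exact this.eventually_const_lt (half_lt_self hc)
  have hk : 0 < c / (2 * √b) := by positivity
  have hle : ENNReal.ofReal (c / (2 * √b)) *
        ∫⁻ r in Ioo a √b, ENNReal.ofReal (U' (r ^ 2 / 2) * r) ≤
      ∫⁻ r in Ioo 0 √b, ENNReal.ofReal (U' (r ^ 2 / 2) * u r) := by
    rw [← lintegral_const_mul' _ _ ENNReal.ofReal_ne_top]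
    refine (setLIntegral_mono' measurableSet_Ioo fun r hr => ?_).trans
      (lintegral_mono_set (Ioo_subset_Ioo_left ha0))
    have hkr : c / (2 * √b) * r ≤ u r := calc
      c / (2 * √b) * r ≤ c / (2 * √b) * √b := by gcongr; exact hr.2.le
      _ = c / 2 := by field_simp
      _ ≤ u r := (hua hr).le
    have hU' := hU'nonneg _ (sq_div_two_mem_Ico_of_mem_Ico ⟨ha0.trans hr.1.le, hr.2⟩)
    rw [← ENNReal.ofReal_mul hk.le, mul_left_comm]
    exact ENNReal.ofReal_le_ofReal (mul_le_mul_of_nonneg_left hkr hU')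
  rw [lintegral_Ioo_ofReal_deriv_sq_div_two_mul_eq_top hb hUderiv hU'nonneg hUtop ha0 hab,
    ENNReal.mul_top (ENNReal.ofReal_pos.2 hk).ne'] at hle
  exact hfin.not_ge hle

/-- If `U : [0, b/2) → ℝ` is continuously differentiable with nonnegative
derivative and `U(s) → +∞` as `s → (b/2)⁻`, and `u : [0, √b] → [0, ∞)` is continuous with
`∫_{(0,√b)} U'(r²/2)·u(r) dr < ∞` (Lebesgue integral of a nonnegative function), then
`u(√b) = 0`. -/
theorem stmt_0
    (b : ℝ) (hb : 0 < b)
    (U U' : ℝ → ℝ)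
    (hUderiv : ∀ s ∈ Set.Ico (0:ℝ) (b/2), HasDerivAt U (U' s) s)
    (hU'cont : ContinuousOn U' (Set.Ico (0:ℝ) (b/2)))
    (hU'nonneg : ∀ s ∈ Set.Ico (0:ℝ) (b/2), 0 ≤ U' s)
    (hUtop : Tendsto U (𝓝[<] (b/2)) atTop)
    (u : ℝ → ℝ)
    (hucont : ContinuousOn u (Set.Icc (0:ℝ) (Real.sqrt b)))
    (hunonneg : ∀ r ∈ Set.Icc (0:ℝ) (Real.sqrt b), 0 ≤ u r)
    (hfin : ∫⁻ r in Set.Ioo (0:ℝ) (Real.sqrt b),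
        ENNReal.ofReal (U' (r ^ 2 / 2) * u r) < ⊤) :
    u (Real.sqrt b) = 0 :=
  stmt_0_general b hb U U' hUderiv hU'nonneg hUtop u hucont hunonneg hfin
end

section
/- Let d ≥ 1 be an integer, b > 0, c > 0, and let U : [0, b/2) → ℝ be twice differentiable with U'(s) ≥ 0 and 0 ≤ U''(s) ≤ c·[U'(s)]² for all s ∈ [0, b/2), and lim_{s→(b/2)⁻} U'(s) = +∞. Then the Lebesgue integral over the open Euclidean ball D = B(0, √b) ⊂ ℝ^d of the nonnegative function q ↦ ‖q‖²·[U'(‖q‖²/2)]² is infinite, i.e. ∫_{B(0,√b)} ‖q‖²·[U'(‖q‖²/2)]² dq = +∞. -/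
/-!
Near `b/2` the hypothesis `U'' ≤ c U'²` says `(1 / U')' ≥ -c`; as `1 / U' → 0` at `b/2`, this
forces `U' s ≥ 1 / (c (b/2 - s))`. In the radius `r = ‖q‖` the integrand is therefore
`≳ (√b - r)⁻²` near the sphere `r = √b`, while the annulus `r ≤ ‖q‖ < √b` has volume `≳ √b - r`.
So the integral over that annulus is `≳ (√b - r)⁻¹`, which is unbounded as `r → √b`.
-/

open MeasureTheory Filter Set Metric Module
open scoped ENNReal Topology

theorem pow_mul_sub_le_pow_succ_sub_pow_succ {R : Type*} [CommRing R] [LinearOrder R]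
    [IsStrictOrderedRing R] {x y : R} (hy : 0 ≤ y) (hyx : y ≤ x) (m : ℕ) :
    x ^ m * (x - y) ≤ x ^ (m + 1) - y ^ (m + 1) := by
  have : 0 ≤ y * (x ^ m - y ^ m) := mul_nonneg hy (sub_nonneg.2 (pow_le_pow_left₀ hy hyx m))
  linear_combination this

theorem eventually_inv_le_mul_sub_of_deriv_le_mul_sq {f f' : ℝ → ℝ} {β c : ℝ}
    (hderiv : ∀ᶠ s in 𝓝[<] β, HasDerivAt f (f' s) s ∧ f' s ≤ c * f s ^ 2)
    (htop : Tendsto f (𝓝[<] β) atTop) :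
    ∀ᶠ s in 𝓝[<] β, (f s)⁻¹ ≤ c * (β - s) := by
  obtain ⟨a, ha, hgood⟩ :=
    mem_nhdsLT_iff_exists_Ioo_subset.1 (hderiv.and (htop.eventually_gt_atTop 0))
  set φ : ℝ → ℝ := fun t ↦ c * t + (f t)⁻¹
  have hφ' : ∀ t ∈ Ioo a β, HasDerivAt φ (c + -f' t / f t ^ 2) t := fun t ht ↦
    ((hasDerivAt_id t).const_mul c).add (((hgood ht).1.1).inv (hgood ht).2.ne') |>.congr_deriv
      (by simp)
  have hφ_mono : MonotoneOn φ (Ioo a β) := by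
    refine monotoneOn_of_hasDerivWithinAt_nonneg (f' := fun t ↦ c + -f' t / f t ^ 2)
      (convex_Ioo a β) (fun t ht ↦ (hφ' t ht).continuousAt.continuousWithinAt) ?_ ?_ <;>
      rw [interior_Ioo]
    · exact fun t ht ↦ (hφ' t ht).hasDerivWithinAt
    · intro t ht
      have hf2 : 0 < f t ^ 2 := pow_pos (hgood ht).2 2
      have : f' t / f t ^ 2 ≤ c := (div_le_iff₀ hf2).2 (hgood ht).1.2
      linarith [neg_div (f t ^ 2) (f' t)]
  have hφ_lim : Tendsto φ (𝓝[<] β) (𝓝 (c * β)) := by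
    simpa using ((continuous_const.mul continuous_id).tendsto β).mono_left nhdsWithin_le_nhds
      |>.add htop.inv_tendsto_atTop
  filter_upwards [Ioo_mem_nhdsLT ha] with s hs
  have : φ s ≤ c * β := ge_of_tendsto hφ_lim <| by
    filter_upwards [Ioo_mem_nhdsLT hs.2] with t ht
    exact hφ_mono hs ⟨hs.1.trans ht.1, ht.2⟩ ht.1.le
  simp only [φ] at this
  linarith

section Annulus

variable {E : Type*} [NormedAddCommGroup E] [NormedSpace ℝ E] [FiniteDimensional ℝ E]
  [Nontrivial E] [MeasurableSpace E] [BorelSpace E] (μ : Measure E) [μ.IsAddHaarMeasure]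

theorem le_addHaar_ball_diff_ball (x : E) {r R : ℝ} (hr : 0 ≤ r) (hrR : r ≤ R) :
    ENNReal.ofReal (R ^ (finrank ℝ E - 1) * (R - r)) * μ (ball 0 1) ≤
      μ (ball x R \ ball x r) := by
  obtain ⟨m, hm⟩ : ∃ m, finrank ℝ E = m + 1 := Nat.exists_eq_add_one.2 finrank_pos
  rw [measure_sdiff (ball_subset_ball hrR) measurableSet_ball.nullMeasurableSet
      measure_ball_lt_top.ne, Measure.addHaar_ball μ x (hr.trans hrR),
    Measure.addHaar_ball μ x hr,
    ← ENNReal.sub_mul fun _ _ ↦ measure_ball_lt_top.ne,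
    ← ENNReal.ofReal_sub _ (by positivity), hm, Nat.add_sub_cancel]
  gcongr
  exact pow_mul_sub_le_pow_succ_sub_pow_succ hr hrR m

theorem lintegral_ball_eq_top_of_div_sq_le {ρ K : ℝ} (hρ : 0 < ρ) (hK : 0 < K) {h : ℝ → ℝ}
    (hh : ∀ᶠ r in 𝓝[<] ρ, K / (ρ - r) ^ 2 ≤ h r) :
    ∫⁻ q in ball 0 ρ, ENNReal.ofReal (h ‖q‖) ∂μ = ⊤ := by
  obtain ⟨r₀, hr₀, hr₀h⟩ := mem_nhdsLT_iff_exists_Ioo_subset.1 hh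
  set C := K * ρ ^ (finrank ℝ E - 1) with hC
  have hannulus : ∀ r ∈ Ioo (max r₀ 0) ρ, ENNReal.ofReal (C / (ρ - r)) * μ (ball 0 1) ≤
      ∫⁻ q in ball 0 ρ, ENNReal.ofReal (h ‖q‖) ∂μ := by
    rintro r ⟨hr, hrρ⟩
    have hr₀r : r₀ < r := (le_max_left _ _).trans_lt hr
    have hr0 : 0 ≤ r := (le_max_right _ _).trans hr.le
    have hgap : 0 < ρ - r := sub_pos.2 hrρ
    calc ENNReal.ofReal (C / (ρ - r)) * μ (ball 0 1)
        = ENNReal.ofReal (K / (ρ - r) ^ 2) *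
            (ENNReal.ofReal (ρ ^ (finrank ℝ E - 1) * (ρ - r)) * μ (ball 0 1)) := by
          rw [← mul_assoc, ← ENNReal.ofReal_mul (by positivity)]
          congr 2
          rw [hC]
          field_simp
      _ ≤ ENNReal.ofReal (K / (ρ - r) ^ 2) * μ (ball 0 ρ \ ball 0 r) := by
          gcongr
          exact le_addHaar_ball_diff_ball μ 0 hr0 hrρ.le
      _ = ∫⁻ _ in ball 0 ρ \ ball 0 r, ENNReal.ofReal (K / (ρ - r) ^ 2) ∂μ :=
          (setLIntegral_const _ _).symm
      _ ≤ ∫⁻ q in ball 0 ρ \ ball 0 r, ENNReal.ofReal (h ‖q‖) ∂μ := by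
          refine setLIntegral_mono' (measurableSet_ball.diff measurableSet_ball) ?_
          rintro q ⟨hqρ, hqr⟩
          rw [mem_ball_zero_iff] at hqρ
          rw [mem_ball_zero_iff, not_lt] at hqr
          refine ENNReal.ofReal_le_ofReal (le_trans ?_ (hr₀h ⟨hr₀r.trans_le hqr, hqρ⟩))
          gcongr
      _ ≤ ∫⁻ q in ball 0 ρ, ENNReal.ofReal (h ‖q‖) ∂μ := lintegral_mono_set sdiff_subset
  have hsub : Tendsto (fun r ↦ ρ - r) (𝓝[<] ρ) (𝓝[>] 0) := by
    have := map_subLeft_nhdsLT (c := ρ) (a := ρ)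
    rw [sub_self] at this
    exact this.le
  have htop : Tendsto (fun r ↦ ENNReal.ofReal (C / (ρ - r)) * μ (ball 0 1)) (𝓝[<] ρ) (𝓝 ⊤) := by
    have : Tendsto (fun r ↦ C / (ρ - r)) (𝓝[<] ρ) atTop :=
      (tendsto_inv_nhdsGT_zero.comp hsub).const_mul_atTop (by positivity)
    have hball : μ (ball 0 1) ≠ 0 := (measure_ball_pos μ (0 : E) one_pos).ne'
    simpa [ENNReal.top_mul hball] using
      ENNReal.Tendsto.mul_const (ENNReal.tendsto_ofReal_atTop.comp this)
        (Or.inr (measure_ball_lt_top (μ := μ) (x := 0) (r := 1)).ne)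
  exact top_unique <| le_of_tendsto htop <|
    mem_of_superset (Ioo_mem_nhdsLT (max_lt hr₀ hρ)) hannulus

end Annulus

theorem tendsto_sq_div_two_nhdsLT {ρ : ℝ} (hρ : 0 < ρ) :
    Tendsto (fun r : ℝ ↦ r ^ 2 / 2) (𝓝[<] ρ) (𝓝[<] (ρ ^ 2 / 2)) := by
  refine tendsto_nhdsWithin_iff.2 ⟨?_, ?_⟩
  · exact ((continuous_pow 2).div_const 2).tendsto ρ |>.mono_left nhdsWithin_le_nhds
  · filter_upwards [Ioo_mem_nhdsLT hρ] with r hr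
    exact div_lt_div_of_pos_right (pow_lt_pow_left₀ hr.2 hr.1.le two_ne_zero) two_pos

theorem stmt_3_general
    (d : ℕ) (hd : 1 ≤ d)
    (b c : ℝ) (hb : 0 < b) (hc : 0 < c)
    (U' U'' : ℝ → ℝ)
    (hU'deriv : ∀ s ∈ Set.Ico (0:ℝ) (b/2), HasDerivAt U' (U'' s) s)
    (hU''le : ∀ s ∈ Set.Ico (0:ℝ) (b/2), U'' s ≤ c * (U' s) ^ 2)
    (hU'top : Tendsto U' (𝓝[<] (b/2)) atTop) :
    ∫⁻ q in Metric.ball (0 : EuclideanSpace ℝ (Fin d)) (Real.sqrt b),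
        ENNReal.ofReal (‖q‖ ^ 2 * (U' (‖q‖ ^ 2 / 2)) ^ 2) = ⊤ := by
  have : Nonempty (Fin d) := ⟨⟨0, hd⟩⟩
  have hρ : 0 < √b := Real.sqrt_pos.2 hb
  have hblowup : ∀ᶠ s in 𝓝[<] (b / 2), (U' s)⁻¹ ≤ c * (b / 2 - s) :=
    eventually_inv_le_mul_sub_of_deriv_le_mul_sq
      (mem_of_superset (Ico_mem_nhdsLT (half_pos hb)) fun s hs ↦ ⟨hU'deriv s hs, hU''le s hs⟩)
      hU'top
  have hsq : Tendsto (fun r : ℝ ↦ r ^ 2 / 2) (𝓝[<] √b) (𝓝[<] (b / 2)) := by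
    simpa [Real.sq_sqrt hb.le] using tendsto_sq_div_two_nhdsLT hρ
  refine lintegral_ball_eq_top_of_div_sq_le (volume : Measure (EuclideanSpace ℝ (Fin d))) hρ
    (K := (4 * c ^ 2)⁻¹) (h := fun r ↦ r ^ 2 * U' (r ^ 2 / 2) ^ 2) (by positivity) ?_
  filter_upwards [hsq.eventually hblowup, hsq.eventually (hU'top.eventually_gt_atTop 0),
    Ioo_mem_nhdsLT (half_lt_self hρ)] with r hinv hpos hr
  set u := U' (r ^ 2 / 2)
  have hgap : 0 < √b - r := sub_pos.2 hr.2
  -- `b/2 - r²/2 = (√b - r)(√b + r)/2 ≤ 2 r (√b - r)` since `r > √b/2`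
  have hinv' : u⁻¹ ≤ 2 * c * (√b - r) * r := by
    refine hinv.trans ?_
    nlinarith [Real.sq_sqrt hb.le, mul_pos hc hgap, hr.1]
  have hone : 1 ≤ 2 * c * (√b - r) * r * u := (inv_le_iff_one_le_mul₀ hpos).1 hinv'
  rw [div_le_iff₀ (by positivity), inv_le_iff_one_le_mul₀ (by positivity)]
  nlinarith [one_le_pow₀ (n := 2) hone]

/-- Under the structural hypotheses on the spring potential `U` (twice
differentiable, `U' ≥ 0`, `0 ≤ U'' ≤ c·(U')²`, `U'(s) → +∞` as `s → (b/2)⁻`), the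
Lebesgue integral over the ball `D = B(0, √b) ⊂ ℝ^d` of `q ↦ ‖q‖²·[U'(‖q‖²/2)]²` is
infinite. -/
theorem stmt_3
    (d : ℕ) (hd : 1 ≤ d)
    (b c : ℝ) (hb : 0 < b) (hc : 0 < c)
    (U U' U'' : ℝ → ℝ)
    (hUderiv : ∀ s ∈ Set.Ico (0:ℝ) (b/2), HasDerivAt U (U' s) s)
    (hU'deriv : ∀ s ∈ Set.Ico (0:ℝ) (b/2), HasDerivAt U' (U'' s) s)
    (hU'nonneg : ∀ s ∈ Set.Ico (0:ℝ) (b/2), 0 ≤ U' s)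
    (hU''nonneg : ∀ s ∈ Set.Ico (0:ℝ) (b/2), 0 ≤ U'' s)
    (hU''le : ∀ s ∈ Set.Ico (0:ℝ) (b/2), U'' s ≤ c * (U' s) ^ 2)
    (hU'top : Tendsto U' (𝓝[<] (b/2)) atTop) :
    ∫⁻ q in Metric.ball (0 : EuclideanSpace ℝ (Fin d)) (Real.sqrt b),
        ENNReal.ofReal (‖q‖ ^ 2 * (U' (‖q‖ ^ 2 / 2)) ^ 2) = ⊤ :=
  stmt_3_general d hd b c hb hc U' U'' hU'deriv hU''le hU'top
end

section
/- Let H > 0, b > 0 and r ∈ (0,1), and define the FENE-like potential U(s) := (Hb/2)·[(1 − 2s/b)^{−r} − 1] for s ∈ [0, b/2). Then: U(0) = 0, U(s) ≥ 0 and U is strictly increasing on [0, b/2); U(s) → +∞ and U'(s) → +∞ as s → (b/2)⁻; ∫_0^{b/2} U(s) ds < ∞; and U''(s) = c(s)·[U'(s)]² for all s ∈ [0, b/2), where c(s) := (2(1 + r)/(Hbr))·(1 − 2s/b)^{r} is continuous and positive on [0, b/2) with lim_{s→(b/2)⁻} c(s) = 0. -/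
open MeasureTheory Filter Set
open scoped ENNReal Topology

/-! Everything is explicit in the gap variable `x = 1 - 2s/b ∈ (0, 1]`:
`U = (Hb/2)(x^{-r} - 1)`, `U' = H r x^{-r-1}` and `U'' = (2Hr(r+1)/b) x^{-r-2}`, so that
`U'' / U'^2 = (2(1+r)/(Hbr)) x^r = c`. As `s → (b/2)⁻` we have `x → 0⁺`, so the negative
powers of `x` blow up while `x^r → 0`, and `U` is integrable because its singularity `x^{-r}` has
exponent `-r > -1`. -/

theorem HasDerivAt.unique_of_eqOn {f g : ℝ → ℝ} {f' g' x : ℝ} {s : Set ℝ}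
    (hf : HasDerivAt f f' x) (hg : HasDerivAt g g' x) (hfg : EqOn f g s) (hx : x ∈ s)
    (hs : UniqueDiffWithinAt ℝ s x) : f' = g' :=
  hs.eq_deriv s hf.hasDerivWithinAt (hg.hasDerivWithinAt.congr hfg (hfg hx))

namespace FENE

noncomputable def gap (b s : ℝ) : ℝ := 1 - 2 * s / b

noncomputable def potential (H b r s : ℝ) : ℝ := H * b / 2 * (gap b s ^ (-r) - 1)

noncomputable def potentialDeriv (H b r s : ℝ) : ℝ := H * r * gap b s ^ (-r - 1)

noncomputable def coeff (H b r s : ℝ) : ℝ := 2 * (1 + r) / (H * b * r) * gap b s ^ r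

variable {H b r s : ℝ}

theorem gap_pos (hb : 0 < b) (hs : s < b / 2) : 0 < gap b s := by
  have : 2 * s / b < 1 := by rw [div_lt_one hb]; linarith
  unfold gap; linarith

theorem gap_half (hb : b ≠ 0) : gap b (b / 2) = 0 := by
  unfold gap; field_simp; ring

theorem continuous_gap : Continuous (gap b) := by
  unfold gap; fun_prop

theorem hasDerivAt_gap : HasDerivAt (gap b) (-(2 / b)) s := by
  have h := ((hasDerivAt_id s).const_mul (2 / b)).const_sub 1
  rw [mul_one] at h
  exact h.congr_of_eventuallyEq (Eventually.of_forall fun t => by simp only [gap, id]; ring)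

theorem hasDerivAt_gap_rpow {p : ℝ} (hs : gap b s ≠ 0) :
    HasDerivAt (fun t => gap b t ^ p) (-(2 / b) * p * gap b s ^ (p - 1)) s :=
  ((Real.hasDerivAt_rpow_const (Or.inl hs)).comp s hasDerivAt_gap).congr_deriv (by ring)

theorem tendsto_gap_nhdsLT (hb : 0 < b) : Tendsto (gap b) (𝓝[<] (b / 2)) (𝓝[>] 0) := by
  refine tendsto_nhdsWithin_of_tendsto_nhds_of_eventually_within _ ?_ ?_
  · simpa [gap_half hb.ne'] using
      (continuous_gap (b := b)).continuousAt.tendsto.mono_left (nhdsWithin_le_nhds (a := b / 2))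
  · filter_upwards [self_mem_nhdsWithin] with s hs using gap_pos hb hs

/-- The singularity at `s = b/2` is that of `(b/2 - s)^p`, up to the factor `(2/b)^p`. -/
theorem integrableOn_gap_rpow {p : ℝ} (hb : 0 < b) (hp : -1 < p) :
    IntegrableOn (fun s => gap b s ^ p) (Ioo 0 (b / 2)) := by
  have h : IntegrableOn (fun s => (b / 2 - s) ^ p) (Ioo 0 (b / 2)) := by
    rw [← intervalIntegrable_iff_integrableOn_Ioo_of_le (by positivity)]
    have := (intervalIntegral.intervalIntegrable_rpow' hp (a := 0) (b := b / 2)).comp_sub_left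
      (b / 2)
    simpa using this.symm
  refine IntegrableOn.congr_fun (h.const_mul ((2 / b) ^ p)) (fun s hs => ?_) measurableSet_Ioo
  have hgap : gap b s = 2 / b * (b / 2 - s) := by unfold gap; field_simp
  rw [hgap, Real.mul_rpow (by positivity) (by linarith [hs.2])]

theorem potential_zero : potential H b r 0 = 0 := by
  simp [potential, gap]

theorem strictMonoOn_potential (hH : 0 < H) (hb : 0 < b) (hr : 0 < r) :
    StrictMonoOn (potential H b r) (Iio (b / 2)) := by
  intro s _ t ht hst
  have hgap : gap b t < gap b s := by
    unfold gap; have := div_lt_div_of_pos_right (by linarith : 2 * s < 2 * t) hb; linarith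
  have := Real.rpow_lt_rpow_of_neg (gap_pos hb ht) hgap (neg_neg_of_pos hr)
  unfold potential; gcongr

theorem potential_nonneg (hH : 0 < H) (hb : 0 < b) (hr : 0 < r) (hs : s ∈ Ico 0 (b / 2)) :
    0 ≤ potential H b r s := by
  rw [← potential_zero (H := H) (b := b) (r := r)]
  exact (strictMonoOn_potential hH hb hr).monotoneOn (by simpa using half_pos hb) hs.2 hs.1

theorem hasDerivAt_potential (hb : 0 < b) (hs : s < b / 2) :
    HasDerivAt (potential H b r) (potentialDeriv H b r s) s := by
  refine (((hasDerivAt_gap_rpow (p := -r) (gap_pos hb hs).ne').sub_const 1).const_mul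
    (H * b / 2)).congr_deriv ?_
  unfold potentialDeriv; field_simp

theorem hasDerivAt_potentialDeriv (hb : 0 < b) (hs : s < b / 2) :
    HasDerivAt (potentialDeriv H b r) (2 * H * r * (r + 1) / b * gap b s ^ (-r - 2)) s := by
  refine ((hasDerivAt_gap_rpow (p := -r - 1) (gap_pos hb hs).ne').const_mul
    (H * r)).congr_deriv ?_
  rw [show -r - 1 - 1 = -r - 2 by ring]; ring

theorem tendsto_potential (hH : 0 < H) (hb : 0 < b) (hr : 0 < r) :
    Tendsto (potential H b r) (𝓝[<] (b / 2)) atTop :=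
  (((tendsto_rpow_neg_nhdsGT_zero (neg_neg_of_pos hr)).comp (tendsto_gap_nhdsLT hb)).atTop_add
    tendsto_const_nhds).const_mul_atTop (by positivity)

theorem tendsto_potentialDeriv (hH : 0 < H) (hb : 0 < b) (hr : 0 < r) :
    Tendsto (potentialDeriv H b r) (𝓝[<] (b / 2)) atTop :=
  ((tendsto_rpow_neg_nhdsGT_zero (by linarith)).comp (tendsto_gap_nhdsLT hb)).const_mul_atTop
    (by positivity)

theorem integrableOn_potential (hb : 0 < b) (hr : r < 1) :
    IntegrableOn (potential H b r) (Ioo 0 (b / 2)) :=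
  ((integrableOn_gap_rpow hb (by linarith)).sub
    (integrableOn_const measure_Ioo_lt_top.ne)).const_mul (H * b / 2)

theorem coeff_mul_potentialDeriv_sq (hH : H ≠ 0) (hb : b ≠ 0) (hr : r ≠ 0)
    (hs : 0 < gap b s) :
    coeff H b r s * potentialDeriv H b r s ^ 2 = 2 * H * r * (r + 1) / b * gap b s ^ (-r - 2) := by
  have hpow : gap b s ^ r * (gap b s ^ (-r - 1)) ^ 2 = gap b s ^ (-r - 2) := by
    rw [← Real.rpow_natCast, ← Real.rpow_mul hs.le, ← Real.rpow_add hs]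
    congr 1; push_cast; ring
  unfold coeff potentialDeriv
  rw [← hpow]; field_simp; ring

theorem continuous_coeff (hr : 0 ≤ r) : Continuous (coeff H b r) :=
  continuous_const.mul (continuous_gap.rpow_const fun _ => Or.inr hr)

theorem coeff_pos (hH : 0 < H) (hb : 0 < b) (hr : 0 < r) (hs : s < b / 2) :
    0 < coeff H b r s := by
  have := gap_pos hb hs
  unfold coeff; positivity

theorem tendsto_coeff (hb : b ≠ 0) (hr : 0 < r) :
    Tendsto (coeff H b r) (𝓝[<] (b / 2)) (𝓝 0) := by
  have h := (continuous_coeff (H := H) (b := b) hr.le).continuousAt (x := b / 2)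
  rw [ContinuousAt, coeff, gap_half hb, Real.zero_rpow hr.ne', mul_zero] at h
  exact h.mono_left nhdsWithin_le_nhds

end FENE

open FENE in
/-- The FENE-like potential `U(s) = (Hb/2)·[(1 − 2s/b)^{−r} − 1]` with
`r ∈ (0,1)` satisfies: `U(0) = 0`; `U ≥ 0` and `U` strictly increasing on `[0, b/2)`;
`U(s) → +∞` and `U'(s) → +∞` as `s → (b/2)⁻`; `U` is integrable on `(0, b/2)`; and
`U''(s) = c(s)·[U'(s)]²` on `[0, b/2)` where `c(s) = (2(1+r)/(Hbr))·(1 − 2s/b)^r` is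
continuous and positive on `[0, b/2)` with `c(s) → 0` as `s → (b/2)⁻`. -/
theorem stmt_7
    (H b r : ℝ) (hH : 0 < H) (hb : 0 < b) (hr : r ∈ Set.Ioo (0:ℝ) 1)
    (U U' U'' c : ℝ → ℝ)
    (hU : ∀ s, U s = H * b / 2 * ((1 - 2 * s / b) ^ (-r) - 1))
    (hU' : ∀ s ∈ Set.Ico (0:ℝ) (b/2), HasDerivAt U (U' s) s)
    (hU'' : ∀ s ∈ Set.Ico (0:ℝ) (b/2), HasDerivAt U' (U'' s) s)
    (hc : ∀ s, c s = 2 * (1 + r) / (H * b * r) * (1 - 2 * s / b) ^ r) :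
    U 0 = 0 ∧
    (∀ s ∈ Set.Ico (0:ℝ) (b/2), 0 ≤ U s) ∧
    StrictMonoOn U (Set.Ico (0:ℝ) (b/2)) ∧
    Tendsto U (𝓝[<] (b/2)) atTop ∧
    Tendsto U' (𝓝[<] (b/2)) atTop ∧
    IntegrableOn U (Set.Ioo (0:ℝ) (b/2)) ∧
    (∀ s ∈ Set.Ico (0:ℝ) (b/2), U'' s = c s * (U' s) ^ 2) ∧
    ContinuousOn c (Set.Ico (0:ℝ) (b/2)) ∧
    (∀ s ∈ Set.Ico (0:ℝ) (b/2), 0 < c s) ∧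
    Tendsto c (𝓝[<] (b/2)) (𝓝 0) := by
  obtain ⟨hr0, hr1⟩ := hr
  obtain rfl : U = potential H b r := funext hU
  obtain rfl : c = coeff H b r := funext hc
  have hU'_eq : EqOn U' (potentialDeriv H b r) (Ico 0 (b / 2)) := fun s hs =>
    (hU' s hs).unique (hasDerivAt_potential hb hs.2)
  refine ⟨potential_zero, fun s hs => potential_nonneg hH hb hr0 hs,
    (strictMonoOn_potential hH hb hr0).mono Ico_subset_Iio_self, tendsto_potential hH hb hr0,
    ?_, integrableOn_potential hb hr1, fun s hs => ?_, (continuous_coeff hr0.le).continuousOn,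
    fun s hs => coeff_pos hH hb hr0 hs.2, tendsto_coeff hb.ne' hr0⟩
  · exact (tendsto_potentialDeriv hH hb hr0).congr' (eventuallyEq_of_mem
      (Ioo_mem_nhdsLT (half_pos hb)) fun s hs => (hU'_eq (Ioo_subset_Ico_self hs)).symm)
  · rw [hU'_eq hs, coeff_mul_potentialDeriv_sq hH.ne' hb.ne' hr0.ne' (gap_pos hb hs.2)]
    exact (hU'' s hs).unique_of_eqOn (hasDerivAt_potentialDeriv hb hs.2) hU'_eq hs
      (uniqueDiffOn_Ico 0 (b / 2) s hs)
end

section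
/- Let (Q, μ) and (D, ν) be σ-finite measure spaces, α ∈ (0, 1), and let θ : Q → [0, ∞] and φ : Q × D → [0, ∞] be measurable (with the convention that φ·|log φ|^α and φ·|log φ| vanish where φ = 0). Then ∫_Q θ(x)^{1+α}·(∫_D φ(x,q)·|log φ(x,q)|^α dν(q)) dμ(x) ≤ (ess sup_{x ∈ Q} ∫_D φ(x,q) dν(q))^{1−α} · ((1−α)·∫_Q θ^{(1+α)/(1−α)} dμ + α·∫_Q ∫_D φ·|log φ| dν dμ), where all integrals are Lebesgue integrals of nonnegative functions with values in [0, ∞]. -/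
/-!
Write `Θ = θ^{(1+α)/(1-α)}`, so that `θ^{1+α} = Θ^{1-α}`. Pointwise
`φ |log φ|^α = φ^{1-α} (φ |log φ|)^α`, so Hölder's inequality on `D` with exponents
`1/(1-α)` and `1/α` bounds the inner integral by `(∫ φ)^{1-α} (∫ φ |log φ|)^α`. Bounding
`∫ φ` by its essential supremum and applying the weighted AM-GM (Young) inequality
`Θ^{1-α} J^α ≤ (1-α) Θ + α J` leaves an integrand that is linear in `Θ` and `J = ∫ φ |log φ|`.
-/

open MeasureTheory
open scoped ENNReal

namespace ENNReal

theorem rpow_one_sub_mul_rpow_le_add {α : ℝ} (h₀ : 0 < α) (h₁ : α < 1) (a b : ℝ≥0∞) :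
    a ^ (1 - α) * b ^ α ≤ ENNReal.ofReal (1 - α) * a + ENNReal.ofReal α * b := by
  have h₁' : 0 < 1 - α := sub_pos.mpr h₁
  have hpq : Real.HolderConjugate (1 - α)⁻¹ α⁻¹ :=
    Real.holderConjugate_iff.mpr ⟨by rw [one_lt_inv₀ h₁']; linarith, by simp⟩
  have young := ENNReal.young_inequality (a ^ (1 - α)) (b ^ α) hpq
  rwa [rpow_rpow_inv h₁'.ne', rpow_rpow_inv h₀.ne', ofReal_inv_of_pos h₁', ofReal_inv_of_pos h₀,
    ENNReal.div_eq_inv_mul, ENNReal.div_eq_inv_mul, inv_inv, inv_inv] at young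

theorem ofReal_mul_abs_rpow {α : ℝ} (h₀ : 0 ≤ α) (h₁ : α < 1) (a b : ℝ) :
    ENNReal.ofReal (a * |b| ^ α) =
      ENNReal.ofReal a ^ (1 - α) * ENNReal.ofReal (a * |b|) ^ α := by
  rcases le_total a 0 with ha | ha
  · rw [ofReal_of_nonpos ha, zero_rpow_of_pos (sub_pos.mpr h₁), zero_mul,
      ofReal_of_nonpos (mul_nonpos_of_nonpos_of_nonneg ha (by positivity))]
  have split : a * |b| ^ α = a ^ (1 - α) * (a * |b|) ^ α := by
    rw [Real.mul_rpow ha (abs_nonneg b), ← mul_assoc, ← Real.rpow_add' ha (by norm_num),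
      sub_add_cancel, Real.rpow_one]
  rw [split, ofReal_mul (by positivity), ofReal_rpow_of_nonneg ha (by linarith),
    ofReal_rpow_of_nonneg (by positivity) h₀]

theorem ofReal_rpow_eq_ofReal_rpow_div_rpow {t : ℝ} (ht : 0 ≤ t) (p : ℝ) {r : ℝ} (hr : 0 < r) :
    ENNReal.ofReal (t ^ p) = ENNReal.ofReal (t ^ (p / r)) ^ r := by
  rw [ofReal_rpow_of_nonneg (by positivity) hr.le, ← Real.rpow_mul ht, div_mul_cancel₀ p hr.ne']

end ENNReal

theorem lintegral_ofReal_mul_abs_log_rpow_le {D : Type*} [MeasurableSpace D] {ν : Measure D}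
    {α : ℝ} (h₀ : 0 ≤ α) (h₁ : α < 1) {f : D → ℝ} (hf : AEMeasurable f ν) :
    ∫⁻ q, ENNReal.ofReal (f q * |Real.log (f q)| ^ α) ∂ν ≤
      (∫⁻ q, ENNReal.ofReal (f q) ∂ν) ^ (1 - α) *
        (∫⁻ q, ENNReal.ofReal (f q * |Real.log (f q)|) ∂ν) ^ α := by
  simp_rw [ENNReal.ofReal_mul_abs_rpow h₀ h₁]
  exact ENNReal.lintegral_mul_norm_pow_le hf.ennreal_ofReal
    (hf.mul (Real.measurable_log.comp_aemeasurable hf).abs).ennreal_ofReal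
    (by linarith) h₀ (sub_add_cancel 1 α)

theorem stmt_18_general
    {Q D : Type*} [MeasurableSpace Q] [MeasurableSpace D]
    (μ : Measure Q) (ν : Measure D) [SigmaFinite ν]
    (α : ℝ) (hα : α ∈ Set.Ioo (0:ℝ) 1)
    (θ : Q → ℝ) (φ : Q × D → ℝ)
    (hθ : Measurable θ) (hφ : Measurable φ)
    (hθnn : ∀ x, 0 ≤ θ x) :
    ∫⁻ x, ENNReal.ofReal (θ x ^ (1 + α)) *
        (∫⁻ q, ENNReal.ofReal (φ (x, q) * |Real.log (φ (x, q))| ^ α) ∂ν) ∂μ ≤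
      (essSup (fun x => ∫⁻ q, ENNReal.ofReal (φ (x, q)) ∂ν) μ) ^ (1 - α) *
        (ENNReal.ofReal (1 - α) * ∫⁻ x, ENNReal.ofReal (θ x ^ ((1 + α) / (1 - α))) ∂μ +
          ENNReal.ofReal α *
            ∫⁻ x, ∫⁻ q, ENNReal.ofReal (φ (x, q) * |Real.log (φ (x, q))|) ∂ν ∂μ) := by
  obtain ⟨hα₀, hα₁⟩ := hα
  set I := fun x => ∫⁻ q, ENNReal.ofReal (φ (x, q)) ∂ν
  set J := fun x => ∫⁻ q, ENNReal.ofReal (φ (x, q) * |Real.log (φ (x, q))|) ∂ν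
  set Θ := fun x => ENNReal.ofReal (θ x ^ ((1 + α) / (1 - α)))
  have hJ : Measurable J :=
    (hφ.mul (Real.measurable_log.comp hφ).abs).ennreal_ofReal.lintegral_prod_right'
  have hΘ : Measurable Θ := (hθ.pow_const _).ennreal_ofReal
  have pointwise : ∀ᵐ x ∂μ, ENNReal.ofReal (θ x ^ (1 + α)) *
      (∫⁻ q, ENNReal.ofReal (φ (x, q) * |Real.log (φ (x, q))| ^ α) ∂ν) ≤
        essSup I μ ^ (1 - α) * (ENNReal.ofReal (1 - α) * Θ x + ENNReal.ofReal α * J x) := by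
    filter_upwards [ENNReal.ae_le_essSup I] with x hIx
    rw [ENNReal.ofReal_rpow_eq_ofReal_rpow_div_rpow (hθnn x) _ (sub_pos.mpr hα₁)]
    calc _ ≤ Θ x ^ (1 - α) * (I x ^ (1 - α) * J x ^ α) := by
          gcongr
          exact lintegral_ofReal_mul_abs_log_rpow_le hα₀.le hα₁
            (hφ.comp measurable_prodMk_left).aemeasurable
      _ = I x ^ (1 - α) * (Θ x ^ (1 - α) * J x ^ α) := by ring
      _ ≤ _ := by
          gcongr
          exact ENNReal.rpow_one_sub_mul_rpow_le_add hα₀ hα₁ _ _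
  calc _ ≤ ∫⁻ x, essSup I μ ^ (1 - α) *
        (ENNReal.ofReal (1 - α) * Θ x + ENNReal.ofReal α * J x) ∂μ := lintegral_mono_ae pointwise
    _ = _ := by
      rw [lintegral_const_mul _ (by fun_prop),
        lintegral_add_left (hΘ.const_mul _), lintegral_const_mul' _ _ ENNReal.ofReal_ne_top,
        lintegral_const_mul' _ _ ENNReal.ofReal_ne_top]

/-- Equi-integrability estimate for `θⁿφⁿ`: for σ-finite measure spaces
`(Q, μ)`, `(D, ν)`, `α ∈ (0,1)`, and measurable nonnegative `θ : Q → [0,∞)`,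
`φ : Q × D → [0,∞)` (with the convention that `φ·|log φ|^α` and `φ·|log φ|` vanish where
`φ = 0`, as is the case with Lean's `Real.log 0 = 0`),
`∫_Q θ^{1+α}·(∫_D φ·|log φ|^α dν) dμ ≤ (ess sup_{x} ∫_D φ dν)^{1−α} ·
  ((1−α)·∫_Q θ^{(1+α)/(1−α)} dμ + α·∫_Q ∫_D φ·|log φ| dν dμ)`. -/
theorem stmt_18
    {Q D : Type*} [MeasurableSpace Q] [MeasurableSpace D]
    (μ : Measure Q) (ν : Measure D) [SigmaFinite μ] [SigmaFinite ν]
    (α : ℝ) (hα : α ∈ Set.Ioo (0:ℝ) 1)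
    (θ : Q → ℝ) (φ : Q × D → ℝ)
    (hθ : Measurable θ) (hφ : Measurable φ)
    (hθnn : ∀ x, 0 ≤ θ x) (hφnn : ∀ p, 0 ≤ φ p) :
    ∫⁻ x, ENNReal.ofReal (θ x ^ (1 + α)) *
        (∫⁻ q, ENNReal.ofReal (φ (x, q) * |Real.log (φ (x, q))| ^ α) ∂ν) ∂μ ≤
      (essSup (fun x => ∫⁻ q, ENNReal.ofReal (φ (x, q)) ∂ν) μ) ^ (1 - α) *
        (ENNReal.ofReal (1 - α) * ∫⁻ x, ENNReal.ofReal (θ x ^ ((1 + α) / (1 - α))) ∂μ +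
          ENNReal.ofReal α *
            ∫⁻ x, ∫⁻ q, ENNReal.ofReal (φ (x, q) * |Real.log (φ (x, q))|) ∂ν ∂μ) :=
  stmt_18_general μ ν α hα θ φ hθ hφ hθnn
end
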